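/- Let S and A be nonempty finite types, γ ∈ (0,1), P a row-stochastic matrix of size |S×A|×|S|, and ρ₀ ∈ ℝ^S a vector with nonnegative entries summing to 1. Let Π^{π'}, Π^π, Π^β be row-stochastic matrices of size |S|×|S×A| and set P^{π'} = Π^{π'}P, P^π = Π^πP, P^β = Π^βP, and define row vectors ρ^{π'}ᵀ = ρ₀ᵀ(I − γP^{π'})⁻¹, ρ^πᵀ = ρ₀ᵀ(I − γP^π)⁻¹, ρ^βᵀ = ρ₀ᵀ(I − γP^β)⁻¹. Then for every α ∈ [0,1], ‖ρ^{π'} − (α ρ^π + (1−α) ρ^β)‖₁ ≤ (γ/(1−γ)²) · (α ‖Π^{π'} − Π^π‖∞ + (1−α) ‖Π^{π'} − Π^β‖∞). -/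

import Mathlib

open Matrix BigOperators

/-- A matrix is row-stochastic if all entries are nonnegative and every row sums to 1. -/
def IsStochastic {m n : Type*} [Fintype m] [Fintype n] (M : Matrix m n ℝ) : Prop :=
  (∀ i j, 0 ≤ M i j) ∧ ∀ i, ∑ j, M i j = 1

/-- `‖x‖₁`: the sum of the absolute values of the entries of a vector. -/
noncomputable def norm1 {n : Type*} [Fintype n] (x : n → ℝ) : ℝ := ∑ i, |x i|

/-- `‖M‖∞`: the maximum over rows of the sum of absolute values of the entries. -/
noncomputable def normInfM {m n : Type*} [Fintype m] [Fintype n] (M : Matrix m n ℝ) : ℝ :=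
  ⨆ i, ∑ j, |M i j|

/-!
Measure row vectors in `ℓ¹` and matrices in the induced norm `‖·‖∞`. Stochastic matrices then have
norm at most `1`, hence `(1 - γ) ‖X‖ ≤ ‖X (1 - γ Q)‖` for stochastic `Q`. With
`ρ_Q := ρ₀ (1 - γ Q)⁻¹` this gives `‖ρ_Q‖₁ ≤ 1 / (1 - γ)`, and the resolvent identity
`(ρ_{Q₁} - ρ_{Q₂}) (1 - γ Q₂) = γ ρ_{Q₁} (Q₁ - Q₂)` gives
`‖ρ_{Q₁} - ρ_{Q₂}‖₁ ≤ γ / (1 - γ)² ‖Q₁ - Q₂‖∞`. For `Q = Π P` with `P` stochastic,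
`‖Π' P - Π P‖∞ ≤ ‖Π' - Π‖∞`, and the mixture is handled by convexity of the norm.
-/

attribute [local instance] Matrix.linftyOpNormedAddCommGroup Matrix.linftyOpNormedSpace
  Matrix.linftyOpNormedRing

theorem Matrix.replicateRow_sub {ι n α : Type*} [Sub α] (v w : n → α) :
    replicateRow ι (v - w) = replicateRow ι v - replicateRow ι w :=
  rfl

section Norms

variable {m n : Type*} [Fintype m] [Fintype n]

theorem normInfM_eq_norm (M : Matrix m n ℝ) : normInfM M = ‖M‖ := by
  rw [linfty_opNorm_def, Finset.sup_univ_eq_ciSup, NNReal.coe_iSup]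
  simp [normInfM]

theorem norm1_eq_norm_replicateRow (x : n → ℝ) : norm1 x = ‖replicateRow Unit x‖ := by
  simp [norm1, linfty_opNorm_replicateRow]

theorem norm1_eq_one_of_nonneg_of_sum_eq_one {x : n → ℝ} (hx : ∀ i, 0 ≤ x i)
    (hsum : ∑ i, x i = 1) : norm1 x = 1 := by
  simp only [norm1, abs_of_nonneg (hx _), hsum]

theorem norm_sub_smul_add_one_sub_smul_le {E : Type*} [SeminormedAddCommGroup E]
    [NormedSpace ℝ E] (a b c : E) {α : ℝ} (hα : α ∈ Set.Icc (0 : ℝ) 1) :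
    ‖a - (α • b + (1 - α) • c)‖ ≤ α * ‖a - b‖ + (1 - α) * ‖a - c‖ := by
  have hα' : 0 ≤ 1 - α := sub_nonneg.2 hα.2
  calc ‖a - (α • b + (1 - α) • c)‖ = ‖α • (a - b) + (1 - α) • (a - c)‖ := by
        congr 1; module
    _ ≤ α * ‖a - b‖ + (1 - α) * ‖a - c‖ := by
        refine (norm_add_le _ _).trans_eq ?_
        rw [norm_smul_of_nonneg hα.1, norm_smul_of_nonneg hα']

theorem norm1_sub_smul_add_one_sub_smul_le (x y z : n → ℝ) {α : ℝ}
    (hα : α ∈ Set.Icc (0 : ℝ) 1) :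
    norm1 (x - (α • y + (1 - α) • z)) ≤ α * norm1 (x - y) + (1 - α) * norm1 (x - z) := by
  simp only [norm1_eq_norm_replicateRow, replicateRow_sub, replicateRow_add, replicateRow_smul]
  exact norm_sub_smul_add_one_sub_smul_le _ _ _ hα

end Norms

namespace IsStochastic

variable {l m n : Type*} [Fintype l] [Fintype m] [Fintype n]

theorem mul {M : Matrix l m ℝ} {N : Matrix m n ℝ} (hM : IsStochastic M) (hN : IsStochastic N) :
    IsStochastic (M * N) := by
  refine ⟨fun i j => Finset.sum_nonneg fun k _ => mul_nonneg (hM.1 i k) (hN.1 k j), fun i => ?_⟩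
  simp only [mul_apply]
  rw [Finset.sum_comm]
  simp only [← Finset.mul_sum, hN.2, mul_one, hM.2]

theorem norm_le_one {M : Matrix m n ℝ} (hM : IsStochastic M) : ‖M‖ ≤ 1 := by
  rw [← normInfM_eq_norm]
  refine Real.iSup_le (fun i => ?_) zero_le_one
  simp only [abs_of_nonneg (hM.1 i _), hM.2 i, le_refl]

theorem normInfM_mul_le {D : Matrix l m ℝ} {M : Matrix m n ℝ} (hM : IsStochastic M) :
    normInfM (D * M) ≤ normInfM D := by
  simp only [normInfM_eq_norm]
  exact (linfty_opNorm_mul D M).trans (mul_le_of_le_one_right (norm_nonneg D) hM.norm_le_one)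

end IsStochastic

section Resolvent

variable {l S : Type*} [Fintype S] [DecidableEq S] {γ : ℝ} {Q Q₁ Q₂ : Matrix S S ℝ}

theorem one_sub_mul_norm_le_norm_mul_one_sub_smul [Fintype l] (X : Matrix l S ℝ) (hγ : 0 ≤ γ)
    (hQ : ‖Q‖ ≤ 1) : (1 - γ) * ‖X‖ ≤ ‖X * (1 - γ • Q)‖ := by
  have hXQ : ‖X * Q‖ ≤ ‖X‖ :=
    (linfty_opNorm_mul X Q).trans (mul_le_of_le_one_right (norm_nonneg X) hQ)
  have hsplit : X = X * (1 - γ • Q) + γ • (X * Q) := by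
    rw [Matrix.mul_sub, Matrix.mul_one, Matrix.mul_smul, sub_add_cancel]
  have hX := calc ‖X‖ = ‖X * (1 - γ • Q) + γ • (X * Q)‖ := congrArg _ hsplit
    _ ≤ ‖X * (1 - γ • Q)‖ + γ * ‖X‖ := by
      refine (norm_add_le _ _).trans ?_
      rw [norm_smul_of_nonneg hγ]
      gcongr
  linarith

theorem isUnit_det_one_sub_smul (hγ : γ ∈ Set.Ico (0 : ℝ) 1) (hQ : ‖Q‖ ≤ 1) :
    IsUnit (1 - γ • Q).det := by
  have hnorm : ‖γ • Q‖ < 1 := by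
    rw [norm_smul_of_nonneg hγ.1]
    exact (mul_le_of_le_one_right hγ.1 hQ).trans_lt hγ.2
  exact (isUnit_iff_isUnit_det _).1 (Units.oneSub _ hnorm).isUnit

theorem one_sub_mul_norm_mul_inv_one_sub_smul_le [Fintype l] (X : Matrix l S ℝ)
    (hγ : γ ∈ Set.Ico (0 : ℝ) 1) (hQ : ‖Q‖ ≤ 1) : (1 - γ) * ‖X * (1 - γ • Q)⁻¹‖ ≤ ‖X‖ := by
  simpa [nonsing_inv_mul_cancel_right _ _ (isUnit_det_one_sub_smul hγ hQ)] using
    one_sub_mul_norm_le_norm_mul_one_sub_smul (X * (1 - γ • Q)⁻¹) hγ.1 hQ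

theorem mul_inv_one_sub_smul_sub_mul (X : Matrix l S ℝ) (hγ : γ ∈ Set.Ico (0 : ℝ) 1)
    (hQ₁ : ‖Q₁‖ ≤ 1) (hQ₂ : ‖Q₂‖ ≤ 1) :
    (X * (1 - γ • Q₁)⁻¹ - X * (1 - γ • Q₂)⁻¹) * (1 - γ • Q₂) =
      γ • (X * (1 - γ • Q₁)⁻¹ * (Q₁ - Q₂)) := by
  set R := X * (1 - γ • Q₁)⁻¹
  have hR : R * (1 - γ • Q₁) = X :=
    nonsing_inv_mul_cancel_right _ _ (isUnit_det_one_sub_smul hγ hQ₁)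
  rw [Matrix.sub_mul, nonsing_inv_mul_cancel_right _ _ (isUnit_det_one_sub_smul hγ hQ₂), ← hR]
  simp only [Matrix.mul_sub, Matrix.mul_one, Matrix.mul_smul]
  module

theorem norm_mul_inv_one_sub_smul_sub_le [Fintype l] (X : Matrix l S ℝ)
    (hγ : γ ∈ Set.Ico (0 : ℝ) 1) (hQ₁ : ‖Q₁‖ ≤ 1) (hQ₂ : ‖Q₂‖ ≤ 1) :
    ‖X * (1 - γ • Q₁)⁻¹ - X * (1 - γ • Q₂)⁻¹‖ ≤ γ / (1 - γ) ^ 2 * (‖X‖ * ‖Q₁ - Q₂‖) := by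
  set R := X * (1 - γ • Q₁)⁻¹
  have hγ₁ : 0 < 1 - γ := sub_pos.2 hγ.2
  have hR : (1 - γ) * ‖R‖ ≤ ‖X‖ := one_sub_mul_norm_mul_inv_one_sub_smul_le X hγ hQ₁
  have hD : (1 - γ) * ‖R - X * (1 - γ • Q₂)⁻¹‖ ≤ γ * (‖R‖ * ‖Q₁ - Q₂‖) := by
    refine (one_sub_mul_norm_le_norm_mul_one_sub_smul _ hγ.1 hQ₂).trans ?_
    rw [mul_inv_one_sub_smul_sub_mul X hγ hQ₁ hQ₂, norm_smul_of_nonneg hγ.1]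
    exact mul_le_mul_of_nonneg_left (linfty_opNorm_mul _ _) hγ.1
  rw [div_mul_eq_mul_div, le_div_iff₀ (pow_pos hγ₁ 2)]
  calc ‖R - X * (1 - γ • Q₂)⁻¹‖ * (1 - γ) ^ 2
      = (1 - γ) * ((1 - γ) * ‖R - X * (1 - γ • Q₂)⁻¹‖) := by ring
    _ ≤ (1 - γ) * (γ * (‖R‖ * ‖Q₁ - Q₂‖)) := by gcongr
    _ = γ * ‖Q₁ - Q₂‖ * ((1 - γ) * ‖R‖) := by ring
    _ ≤ γ * ‖Q₁ - Q₂‖ * ‖X‖ := by have hγ₀ := hγ.1; gcongr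
    _ = γ * (‖X‖ * ‖Q₁ - Q₂‖) := by ring

theorem norm1_vecMul_inv_one_sub_smul_sub_le (x : S → ℝ) (hγ : γ ∈ Set.Ico (0 : ℝ) 1)
    (hQ₁ : IsStochastic Q₁) (hQ₂ : IsStochastic Q₂) :
    norm1 (x ᵥ* (1 - γ • Q₁)⁻¹ - x ᵥ* (1 - γ • Q₂)⁻¹) ≤
      γ / (1 - γ) ^ 2 * (norm1 x * normInfM (Q₁ - Q₂)) := by
  simp only [norm1_eq_norm_replicateRow, normInfM_eq_norm, replicateRow_sub, replicateRow_vecMul]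
  exact norm_mul_inv_one_sub_smul_sub_le _ hγ hQ₁.norm_le_one hQ₂.norm_le_one

end Resolvent

theorem model_free_bound_of_mixture_state_distributions_general
    {S A : Type*} [Fintype S] [Fintype A] [DecidableEq S]
    (γ : ℝ) (hγ : γ ∈ Set.Ioo (0 : ℝ) 1)
    (P : Matrix (S × A) S ℝ) (hP : IsStochastic P)
    (polπ' polπ polβ : Matrix S (S × A) ℝ)
    (hpolπ' : IsStochastic polπ') (hpolπ : IsStochastic polπ) (hpolβ : IsStochastic polβ)
    (ρ₀ : S → ℝ) (hρ₀pos : ∀ s, 0 ≤ ρ₀ s) (hρ₀sum : ∑ s, ρ₀ s = 1)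
    (α : ℝ) (hα : α ∈ Set.Icc (0 : ℝ) 1) :
    let Pπ' := polπ' * P
    let Pπ := polπ * P
    let Pβ := polβ * P
    let ρπ' := ρ₀ ᵥ* (1 - γ • Pπ')⁻¹
    let ρπ := ρ₀ ᵥ* (1 - γ • Pπ)⁻¹
    let ρβ := ρ₀ ᵥ* (1 - γ • Pβ)⁻¹
    norm1 (ρπ' - (α • ρπ + (1 - α) • ρβ)) ≤
      γ / (1 - γ) ^ 2 * (α * normInfM (polπ' - polπ) + (1 - α) * normInfM (polπ' - polβ)) := by
  intro Pπ' Pπ Pβ ρπ' ρπ ρβ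
  have hρ₀ : norm1 ρ₀ = 1 := norm1_eq_one_of_nonneg_of_sum_eq_one hρ₀pos hρ₀sum
  have hdist {pol : Matrix S (S × A) ℝ} (hpol : IsStochastic pol) :
      norm1 (ρπ' - ρ₀ ᵥ* (1 - γ • (pol * P))⁻¹) ≤ γ / (1 - γ) ^ 2 * normInfM (polπ' - pol) := by
    refine (norm1_vecMul_inv_one_sub_smul_sub_le ρ₀ (Set.Ioo_subset_Ico_self hγ)
      (hpolπ'.mul hP) (hpol.mul hP)).trans ?_
    rw [hρ₀, one_mul, ← Matrix.sub_mul]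
    exact mul_le_mul_of_nonneg_left hP.normInfM_mul_le (by have hγ₀ := hγ.1; positivity)
  calc norm1 (ρπ' - (α • ρπ + (1 - α) • ρβ))
      ≤ α * norm1 (ρπ' - ρπ) + (1 - α) * norm1 (ρπ' - ρβ) :=
        norm1_sub_smul_add_one_sub_smul_le _ _ _ hα
    _ ≤ α * (γ / (1 - γ) ^ 2 * normInfM (polπ' - polπ)) +
          (1 - α) * (γ / (1 - γ) ^ 2 * normInfM (polπ' - polβ)) := by
        have hα₀ : 0 ≤ α := hα.1
        have hα₁ : 0 ≤ 1 - α := sub_nonneg.2 hα.2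
        gcongr
        exacts [hdist hpolπ, hdist hpolβ]
    _ = _ := by ring

/-- Corollary 1, model-free bound. `polπ'`, `polπ`, `polβ` are the policy
matrices `Π^{π'}, Π^π, Π^β`:
`‖ρ^{π'} − (α ρ^π + (1−α) ρ^β)‖₁
  ≤ (γ/(1−γ)²) (α ‖Π^{π'} − Π^π‖∞ + (1−α) ‖Π^{π'} − Π^β‖∞)`. -/
theorem model_free_bound_of_mixture_state_distributions
    {S A : Type*} [Fintype S] [Fintype A] [Nonempty S] [Nonempty A] [DecidableEq S]
    (γ : ℝ) (hγ : γ ∈ Set.Ioo (0 : ℝ) 1)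
    (P : Matrix (S × A) S ℝ) (hP : IsStochastic P)
    (polπ' polπ polβ : Matrix S (S × A) ℝ)
    (hpolπ' : IsStochastic polπ') (hpolπ : IsStochastic polπ) (hpolβ : IsStochastic polβ)
    (ρ₀ : S → ℝ) (hρ₀pos : ∀ s, 0 ≤ ρ₀ s) (hρ₀sum : ∑ s, ρ₀ s = 1)
    (α : ℝ) (hα : α ∈ Set.Icc (0 : ℝ) 1) :
    let Pπ' := polπ' * P
    let Pπ := polπ * P
    let Pβ := polβ * P
    let ρπ' := ρ₀ ᵥ* (1 - γ • Pπ')⁻¹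
    let ρπ := ρ₀ ᵥ* (1 - γ • Pπ)⁻¹
    let ρβ := ρ₀ ᵥ* (1 - γ • Pβ)⁻¹
    norm1 (ρπ' - (α • ρπ + (1 - α) • ρβ)) ≤
      γ / (1 - γ) ^ 2 * (α * normInfM (polπ' - polπ) + (1 - α) * normInfM (polπ' - polβ)) :=
  model_free_bound_of_mixture_state_distributions_general γ hγ P hP polπ' polπ polβ hpolπ' hpolπ
    hpolβ ρ₀ hρ₀pos hρ₀sum α hα
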